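/- Let G be an infinite (g,o)-growing graph with maximal degree Δ < ∞, fix i ∈ {0,…,m}, S ⊆ L_i, U = F_{i+1} ∪ S, τ ∈ Ω⁺, x ∈ S and y ∈ L_i \ S, and let μ_U^{y,+}, μ_U^{y,−} be the Gibbs measures on U with boundary condition τ modified to have spin +1, respectively −1, at y. Let C ⊆ U ∪ {y} be a connected set with y ∈ C and x ∉ C, and let Γ_C be the event {σ_z = −1 for all z ∈ C ∩ U and σ_z = +1 for all z ∈ ∂_V C ∩ U}. Then μ_U^{y,−}(σ_x = +1 | Γ_C) ≥ μ_U^{y,+}(σ_x = +1). -/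

import Mathlib

/- Common framework: Ising model with boundary conditions on (finite pieces of)
   locally finite graphs, heat-bath Glauber dynamics quantities. -/

open Finset
open scoped Classical

noncomputable section

namespace IsingGlauber

/-- The real spin value of a Boolean spin: `true ↦ +1`, `false ↦ -1`. -/
def spin (b : Bool) : ℝ := if b then 1 else -1

variable {V : Type*}

/-- Neighbourhood finset of a vertex, from an explicit local finiteness witness. -/
def nbr (G : SimpleGraph V) (hlf : G.LocallyFinite) (x : V) : Finset V :=
  @SimpleGraph.neighborFinset V G x (hlf x)

/-- `G` is `(g,o)`-growing: every vertex `x` (say at distance `r` from `o`) has at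
    least `g` more neighbours in level `r+1` than in the ball of radius `r`. -/
def IsGrowing (G : SimpleGraph V) (hlf : G.LocallyFinite) (g : ℕ) (o : V) : Prop :=
  ∀ x : V,
    ((nbr G hlf x).filter fun z => G.dist o z ≤ G.dist o x).card + g ≤
      ((nbr G hlf x).filter fun z => G.dist o z = G.dist o x + 1).card

variable [DecidableEq V]

/-- External vertex boundary of a finite vertex set. -/
def vbd (G : SimpleGraph V) (hlf : G.LocallyFinite) (A : Finset V) : Finset V :=
  A.biUnion (fun a => nbr G hlf a) \ A

/-- Closure `A ∪ ∂_V A` of a finite vertex set. -/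
def cl (G : SimpleGraph V) (hlf : G.LocallyFinite) (A : Finset V) : Finset V :=
  A ∪ vbd G hlf A

/-- Ising Hamiltonian (zero field) with boundary: `Σ_{(x,y) ∈ E(A ∪ ∂_V A)} σ_x σ_y`,
    the sum over edges with both endpoints in `A ∪ ∂_V A` (each edge counted once). -/
def energyB (G : SimpleGraph V) (hlf : G.LocallyFinite) (A : Finset V) (σ : V → Bool) : ℝ :=
  (1 / 2) * ∑ x ∈ cl G hlf A, ∑ y ∈ (cl G hlf A).filter (fun y => G.Adj x y),
    spin (σ x) * spin (σ y)

/-- Free-boundary Ising Hamiltonian: `Σ_{(x,y) ∈ E(A)} σ_x σ_y`,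
    the sum over edges with both endpoints in `A` (each edge counted once). -/
def energyF (G : SimpleGraph V) (A : Finset V) (σ : V → Bool) : ℝ :=
  (1 / 2) * ∑ x ∈ A, ∑ y ∈ A.filter (fun y => G.Adj x y), spin (σ x) * spin (σ y)

/-- The configuration equal to `p` on `A` and to `η` off `A`. -/
def patch (A : Finset V) (η : V → Bool) (p : ∀ a ∈ A, Bool) : V → Bool :=
  fun v => if h : v ∈ A then p v h else η v

/-- Unnormalised Gibbs sum over configurations agreeing with `η` off `A`,
    with energy functional `E` (which should already include the factor `β`). -/
def wsum (E : (V → Bool) → ℝ) (A : Finset V) (η : V → Bool) (f : (V → Bool) → ℝ) : ℝ :=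
  ∑ p ∈ A.pi (fun _ => (Finset.univ : Finset Bool)),
    Real.exp (E (patch A η p)) * f (patch A η p)

/-- Gibbs expectation of `f` for the measure on region `A` with boundary condition `η`. -/
def gExp (E : (V → Bool) → ℝ) (A : Finset V) (η : V → Bool) (f : (V → Bool) → ℝ) : ℝ :=
  wsum E A η f / wsum E A η (fun _ => 1)

/-- Gibbs probability of an event. -/
def gProb (E : (V → Bool) → ℝ) (A : Finset V) (η : V → Bool) (P : (V → Bool) → Prop) : ℝ :=
  gExp E A η (fun σ => if P σ then 1 else 0)

/-- Gibbs variance of `f`. -/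
def gVar (E : (V → Bool) → ℝ) (A : Finset V) (η : V → Bool) (f : (V → Bool) → ℝ) : ℝ :=
  gExp E A η (fun σ => f σ ^ 2) - gExp E A η f ^ 2

/-- Dirichlet form of the heat-bath Glauber dynamics:
    `D(f) = Σ_{x ∈ A} μ(Var_x(f))`, where `Var_x(f)(σ)` is the variance of `f`
    under the one-site conditional Gibbs measure at `x` given `σ` elsewhere. -/
def dirich (E : (V → Bool) → ℝ) (A : Finset V) (η : V → Bool) (f : (V → Bool) → ℝ) : ℝ :=
  ∑ x ∈ A, gExp E A η (fun σ => gVar E {x} σ f)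

/-- Spectral gap `c_gap(μ) = inf { D(f)/Var(f) : Var(f) ≠ 0 }`. -/
def cgap (E : (V → Bool) → ℝ) (A : Finset V) (η : V → Bool) : ℝ :=
  sInf {r : ℝ | ∃ f : (V → Bool) → ℝ, gVar E A η f ≠ 0 ∧ r = dirich E A η f / gVar E A η f}

/-- The edge boundary of `C`, encoded as ordered pairs `(u,v)` with `u ∈ C`,
    `v ∉ C` and `u ~ v`; these pairs are in bijection with the boundary edges. -/
def obd (G : SimpleGraph V) (hlf : G.LocallyFinite) (C : Finset V) : Finset (V × V) :=
  (C ×ˢ C.biUnion (fun c => nbr G hlf c)).filter (fun p => G.Adj p.1 p.2 ∧ p.2 ∉ C)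

end IsingGlauber

open IsingGlauber

/-!
Split `U` into `D = U ∩ (C ∪ ∂C)` and `W = U \ (C ∪ ∂C)`. The event `Γ_C` fixes every spin
of `D` (minus on `C`, plus on `∂C`), so `μ_U^{y,-}(· | Γ_C)` is the Ising measure on `W` with
a boundary condition that is plus on `∂C ∩ U`, while `μ_U^{y,+}` is a mixture, over the spins
on `D`, of Ising measures on `W`. The boundary `∂W` avoids `C`, hence `y`, and its part inside
`U` lies in `∂C`; so every boundary condition in the mixture is, on `∂W`, below the conditioned
one. Since the Ising measure on `W` depends on the boundary condition only through `∂W`, and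
`β ≥ 0` makes the Ising weight supermodular, Holley's inequality (from the four functions
theorem) compares each component of the mixture with the conditioned measure.
-/

namespace IsingGlauber

variable {V : Type*} [DecidableEq V]

/- A configuration on `A` is encoded by its set `s ⊆ A` of plus spins, so that `⊓` and `⊔` of
configurations become `∩` and `∪`, as the four functions theorem needs. -/
def conf (A : Finset V) (η : V → Bool) (s : Finset V) : V → Bool :=
  fun v => if v ∈ A then decide (v ∈ s) else η v

section Conf

variable {A : Finset V} {η : V → Bool} {s : Finset V} {v : V}

@[simp] lemma conf_of_mem (hv : v ∈ A) : conf A η s v = decide (v ∈ s) := if_pos hv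

@[simp] lemma conf_of_notMem (hv : v ∉ A) : conf A η s v = η v := if_neg hv

lemma patch_eq_conf (p : ∀ a ∈ A, Bool) :
    patch A η p = conf A η {a ∈ A | ∀ h : a ∈ A, p a h} := by
  funext v
  by_cases hv : v ∈ A <;> simp [patch, conf, hv]

lemma wsum_eq_sum_powerset (E : (V → Bool) → ℝ) (A : Finset V) (η : V → Bool)
    (f : (V → Bool) → ℝ) :
    wsum E A η f = ∑ s ∈ A.powerset, Real.exp (E (conf A η s)) * f (conf A η s) := by
  unfold wsum
  refine Finset.sum_nbij' (fun p => {a ∈ A | ∀ h : a ∈ A, p a h}) (fun s a _ => decide (a ∈ s))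
    ?_ ?_ ?_ ?_ fun p _ => by rw [patch_eq_conf]
  · intro p _; simp
  · intro s _; simp [em]
  · intro p _
    funext a ha
    simp [ha]
  · intro s hs
    ext a
    simp only [Finset.mem_filter, decide_eq_true_eq]
    exact ⟨fun h => h.2 h.1, fun h => ⟨Finset.mem_powerset.1 hs h, fun _ => h⟩⟩

lemma wsum_congr (E : (V → Bool) → ℝ) {f g : (V → Bool) → ℝ}
    (h : ∀ σ, (∀ v ∉ A, σ v = η v) → f σ = g σ) : wsum E A η f = wsum E A η g :=
  Finset.sum_congr rfl fun p _ => by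
    rw [h _ fun v hv => by simp [patch, hv]]

lemma wsum_one_pos (E : (V → Bool) → ℝ) (A : Finset V) (η : V → Bool) :
    0 < wsum E A η (fun _ => 1) := by
  rw [wsum_eq_sum_powerset]
  exact Finset.sum_pos (fun s _ => by simp [Real.exp_pos]) ⟨∅, Finset.empty_mem_powerset A⟩

lemma sum_powerset_union {M : Type*} [AddCommMonoid M] {D W : Finset V} (hDW : Disjoint D W)
    (F : Finset V → M) :
    ∑ u ∈ (D ∪ W).powerset, F u = ∑ t ∈ D.powerset, ∑ s ∈ W.powerset, F (t ∪ s) := by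
  rw [← Finset.sum_product']
  refine Finset.sum_nbij' (fun u => (u ∩ D, u ∩ W)) (fun p => p.1 ∪ p.2) ?_ ?_ ?_ ?_ ?_
  · intro u _; simp
  · intro p hp
    simp only [Finset.mem_product, Finset.mem_powerset] at hp
    exact Finset.mem_powerset.2 (Finset.union_subset_union hp.1 hp.2)
  · intro u hu
    rw [Finset.mem_powerset] at hu
    simp [← Finset.inter_union_distrib_left, Finset.inter_eq_left.2 hu]
  · intro p hp
    simp only [Finset.mem_product, Finset.mem_powerset] at hp
    have h₁ : Disjoint p.1 W := hDW.mono_left hp.1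
    have h₂ : Disjoint p.2 D := hDW.symm.mono_left hp.2
    simp [Finset.union_inter_distrib_right, Finset.inter_eq_left.2 hp.1,
      Finset.inter_eq_left.2 hp.2, Finset.disjoint_iff_inter_eq_empty.1 h₁,
      Finset.disjoint_iff_inter_eq_empty.1 h₂]
  · intro u hu
    rw [Finset.mem_powerset] at hu
    simp [← Finset.inter_union_distrib_left, Finset.inter_eq_left.2 hu]

lemma conf_union {D W : Finset V} (hDW : Disjoint D W) (η : V → Bool) {t s : Finset V}
    (ht : t ⊆ D) (hs : s ⊆ W) : conf (D ∪ W) η (t ∪ s) = conf W (conf D η t) s := by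
  funext v
  by_cases hvW : v ∈ W
  · have hvD : v ∉ D := Finset.disjoint_right.1 hDW hvW
    have hvt : v ∉ t := fun h => hvD (ht h)
    simp [hvW, hvD, hvt]
  · have hvs : v ∉ s := fun h => hvW (hs h)
    by_cases hvD : v ∈ D <;> simp [hvW, hvD, hvs]

lemma wsum_union (E : (V → Bool) → ℝ) {D W : Finset V} (hDW : Disjoint D W) (η : V → Bool)
    (f : (V → Bool) → ℝ) :
    wsum E (D ∪ W) η f = ∑ t ∈ D.powerset, wsum E W (conf D η t) f := by
  simp only [wsum_eq_sum_powerset, sum_powerset_union hDW]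
  refine Finset.sum_congr rfl fun t ht => Finset.sum_congr rfl fun s hs => ?_
  rw [conf_union hDW η (Finset.mem_powerset.1 ht) (Finset.mem_powerset.1 hs)]

end Conf

section Gibbs

variable (E : (V → Bool) → ℝ)

lemma gProb_le_one (A : Finset V) (η : V → Bool) (P : (V → Bool) → Prop) :
    gProb E A η P ≤ 1 := by
  unfold gProb gExp
  rw [div_le_one (wsum_one_pos E A η)]
  exact Finset.sum_le_sum fun p _ =>
    mul_le_mul_of_nonneg_left (by dsimp only; split_ifs <;> norm_num) (Real.exp_pos _).le

lemma gProb_eq_one {A : Finset V} {η : V → Bool} {P : (V → Bool) → Prop}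
    (h : ∀ σ, (∀ v ∉ A, σ v = η v) → P σ) : gProb E A η P = 1 := by
  unfold gProb gExp
  rw [wsum_congr E fun σ hσ => if_pos (h σ hσ)]
  exact div_self (wsum_one_pos E A η).ne'

lemma gExp_union_le {D W : Finset V} (hDW : Disjoint D W) {η : V → Bool}
    {f : (V → Bool) → ℝ} {c : ℝ} (h : ∀ t ⊆ D, gExp E W (conf D η t) f ≤ c) :
    gExp E (D ∪ W) η f ≤ c := by
  unfold gExp at h ⊢
  rw [div_le_iff₀ (wsum_one_pos E _ η), wsum_union E hDW, wsum_union E hDW, Finset.mul_sum]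
  exact Finset.sum_le_sum fun t ht =>
    (div_le_iff₀ (wsum_one_pos E _ _)).1 (h t (Finset.mem_powerset.1 ht))

lemma wsum_union_ite_pattern {D W : Finset V} (hDW : Disjoint D W) {t₀ : Finset V}
    (ht₀ : t₀ ⊆ D) (η : V → Bool) (f : (V → Bool) → ℝ) :
    wsum E (D ∪ W) η (fun σ => if ∀ v ∈ D, σ v = decide (v ∈ t₀) then f σ else 0) =
      wsum E W (conf D η t₀) f := by
  have hpattern : ∀ t ⊆ D, ∀ σ : V → Bool, (∀ v ∉ W, σ v = conf D η t v) →
      ((∀ v ∈ D, σ v = decide (v ∈ t₀)) ↔ t = t₀) := by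
    intro t ht σ hσ
    have hσD : ∀ v ∈ D, σ v = decide (v ∈ t) := fun v hv => by
      rw [hσ v (Finset.disjoint_left.1 hDW hv), conf_of_mem hv]
    refine ⟨fun h => Finset.ext fun v => ?_, fun h => h ▸ hσD⟩
    by_cases hv : v ∈ D
    · simpa [hσD v hv] using h v hv
    · exact iff_of_false (fun h' => hv (ht h')) (fun h' => hv (ht₀ h'))
  rw [wsum_union E hDW, Finset.sum_eq_single_of_mem t₀ (Finset.mem_powerset.2 ht₀)]
  · exact wsum_congr E fun σ hσ => if_pos ((hpattern t₀ ht₀ σ hσ).2 rfl)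
  · intro t ht hne
    rw [wsum_congr E (g := fun _ => 0) fun σ hσ =>
      if_neg fun h => hne ((hpattern t (Finset.mem_powerset.1 ht) σ hσ).1 h)]
    simp [wsum]

lemma gProb_and_div_gProb_of_iff_pattern {D W : Finset V} (hDW : Disjoint D W)
    {t₀ : Finset V} (ht₀ : t₀ ⊆ D) {Γ : (V → Bool) → Prop}
    (hΓ : ∀ σ, Γ σ ↔ ∀ v ∈ D, σ v = decide (v ∈ t₀)) (η : V → Bool) (P : (V → Bool) → Prop) :
    gProb E (D ∪ W) η (fun σ => P σ ∧ Γ σ) / gProb E (D ∪ W) η Γ =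
      gProb E W (conf D η t₀) P := by
  unfold gProb gExp
  rw [div_div_div_cancel_right₀ (wsum_one_pos E _ η).ne',
    ← wsum_union_ite_pattern E hDW ht₀, ← wsum_union_ite_pattern E hDW ht₀]
  congr 1 <;> refine wsum_congr E fun σ _ => ?_ <;> by_cases P σ <;> simp_all

end Gibbs

section Holley

lemma spin_mul_add_spin_mul_le (a b c d : Bool) :
    spin a * spin c + spin b * spin d ≤
      spin (a ⊓ b) * spin (c ⊓ d) + spin (a ⊔ b) * spin (c ⊔ d) := by
  cases a <;> cases b <;> cases c <;> cases d <;> norm_num [spin]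

lemma energyB_add_energyB_le (G : SimpleGraph V) (hlf : G.LocallyFinite) (A : Finset V)
    (σ σ' : V → Bool) :
    energyB G hlf A σ + energyB G hlf A σ' ≤
      energyB G hlf A (σ ⊓ σ') + energyB G hlf A (σ ⊔ σ') := by
  unfold energyB
  rw [← mul_add, ← mul_add, ← Finset.sum_add_distrib, ← Finset.sum_add_distrib]
  refine mul_le_mul_of_nonneg_left (Finset.sum_le_sum fun u _ => ?_) (by norm_num)
  rw [← Finset.sum_add_distrib, ← Finset.sum_add_distrib]
  exact Finset.sum_le_sum fun z _ => spin_mul_add_spin_mul_le _ _ _ _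

lemma holley_powerset {α : Type*} [DecidableEq α] (u : Finset α) {f g μ ν : Finset α → ℝ}
    (hf : 0 ≤ f) (hg : 0 ≤ g) (hμ : 0 ≤ μ) (hμν : ∀ s t, μ t ≤ ν (s ∪ t))
    (h : ∀ s t, g s * f t ≤ f (s ∩ t) * g (s ∪ t)) :
    (∑ s ∈ u.powerset, g s) * ∑ s ∈ u.powerset, μ s * f s ≤
      (∑ s ∈ u.powerset, f s) * ∑ s ∈ u.powerset, ν s * g s := by
  have hν : 0 ≤ ν := fun s => (hμ s).trans (by simpa using hμν s s)
  simpa using Finset.four_functions_theorem u hg (mul_nonneg hμ hf) hf (mul_nonneg hν hg)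
    (fun s _ t _ => by
      calc g s * (μ t * f t) = μ t * (g s * f t) := by ring
        _ ≤ ν (s ∪ t) * (f (s ∩ t) * g (s ∪ t)) :=
          mul_le_mul (hμν s t) (h s t) (mul_nonneg (hg s) (hf t)) ((hμ t).trans (hμν s t))
        _ = f (s ∩ t) * (ν (s ∪ t) * g (s ∪ t)) := by ring)
    subset_rfl subset_rfl

variable {W : Finset V} {η₁ η₂ : V → Bool}

lemma conf_inf_conf (hη : η₁ ≤ η₂) (s t : Finset V) :
    conf W η₂ s ⊓ conf W η₁ t = conf W η₁ (s ∩ t) := by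
  funext v
  by_cases hv : v ∈ W
  · simp [hv, Bool.decide_and]
  · simpa [hv, Bool.le_iff_imp] using hη v

lemma conf_sup_conf (hη : η₁ ≤ η₂) (s t : Finset V) :
    conf W η₂ s ⊔ conf W η₁ t = conf W η₂ (s ∪ t) := by
  funext v
  by_cases hv : v ∈ W
  · simp [hv, Bool.decide_or]
  · simpa [hv, Bool.le_iff_imp] using hη v

lemma conf_le_conf (hη : η₁ ≤ η₂) {s t : Finset V} (hst : s ⊆ t) : conf W η₁ s ≤ conf W η₂ t := by
  intro v
  by_cases hv : v ∈ W
  · simpa [hv, Bool.le_iff_imp] using fun h => hst h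
  · simpa [hv, Bool.le_iff_imp] using hη v

theorem gProb_le_gProb_of_le (G : SimpleGraph V) (hlf : G.LocallyFinite) (A : Finset V)
    {β : ℝ} (hβ : 0 ≤ β) (W : Finset V) (hη : η₁ ≤ η₂) {P : (V → Bool) → Prop}
    (hP : Monotone P) :
    gProb (fun σ => β * energyB G hlf A σ) W η₁ P ≤
      gProb (fun σ => β * energyB G hlf A σ) W η₂ P := by
  set E : (V → Bool) → ℝ := fun σ => β * energyB G hlf A σ
  set w : (V → Bool) → Finset V → ℝ := fun η s => Real.exp (E (conf W η s))
  set ind : (V → Bool) → Finset V → ℝ := fun η s => if P (conf W η s) then 1 else 0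
  have hsupermod : ∀ s t, w η₂ s * w η₁ t ≤ w η₁ (s ∩ t) * w η₂ (s ∪ t) := by
    intro s t
    simp only [w, E, ← Real.exp_add, Real.exp_le_exp, ← conf_inf_conf hη, ← conf_sup_conf hη,
      ← mul_add]
    exact mul_le_mul_of_nonneg_left (energyB_add_energyB_le G hlf A _ _) hβ
  have hind : ∀ s t, ind η₁ t ≤ ind η₂ (s ∪ t) := by
    intro s t
    simp only [ind]
    split_ifs with h₁ h₂ <;> norm_num
    exact h₂ (hP (conf_le_conf hη Finset.subset_union_right) h₁)
  have hholley := holley_powerset W (fun s => (Real.exp_pos _).le) (fun s => (Real.exp_pos _).le)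
    (fun s => by simp only [ind]; split_ifs <;> norm_num) hind hsupermod
  unfold gProb gExp
  rw [div_le_div_iff₀ (wsum_one_pos E W η₁) (wsum_one_pos E W η₂)]
  simp only [wsum_eq_sum_powerset, ind, one_mul, mul_comm (Real.exp _)] at hholley ⊢
  linarith

end Holley

section Locality

variable (G : SimpleGraph V) (hlf : G.LocallyFinite)

lemma mem_vbd_iff {A : Finset V} {v : V} :
    v ∈ vbd G hlf A ↔ v ∉ A ∧ ∃ a ∈ A, G.Adj a v := by
  simp [vbd, nbr, and_comm]

variable {W : Finset V} {η₁ η₂ : V → Bool}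

lemma energyB_conf_sub_energyB_conf (A : Finset V) (h : ∀ v ∈ vbd G hlf W, η₁ v = η₂ v)
    (s : Finset V) :
    energyB G hlf A (conf W η₁ s) - energyB G hlf A (conf W η₂ s) =
      energyB G hlf A (conf W η₁ ∅) - energyB G hlf A (conf W η₂ ∅) := by
  have hedge : ∀ u z, G.Adj u z →
      spin (conf W η₁ s u) * spin (conf W η₁ s z) - spin (conf W η₂ s u) * spin (conf W η₂ s z) =
        spin (conf W η₁ ∅ u) * spin (conf W η₁ ∅ z) -
          spin (conf W η₂ ∅ u) * spin (conf W η₂ ∅ z) := by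
    intro u z huz
    by_cases hu : u ∈ W <;> by_cases hz : z ∈ W
    · simp [hu, hz]
    · simp [hu, hz, h z ((mem_vbd_iff G hlf).2 ⟨hz, u, hu, huz⟩)]
    · simp [hu, hz, h u ((mem_vbd_iff G hlf).2 ⟨hu, z, hz, huz.symm⟩)]
    · simp [hu, hz]
  unfold energyB
  simp only [← mul_sub, ← Finset.sum_sub_distrib]
  congr 1
  refine Finset.sum_congr rfl fun u _ => Finset.sum_congr rfl fun z hz => ?_
  exact hedge u z (Finset.mem_filter.1 hz).2

lemma gExp_congr_of_eqOn_vbd (A : Finset V) (β : ℝ) (h : ∀ v ∈ vbd G hlf W, η₁ v = η₂ v)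
    {f g : (V → Bool) → ℝ} (hfg : ∀ s ⊆ W, f (conf W η₁ s) = g (conf W η₂ s)) :
    gExp (fun σ => β * energyB G hlf A σ) W η₁ f =
      gExp (fun σ => β * energyB G hlf A σ) W η₂ g := by
  set c := β * (energyB G hlf A (conf W η₁ ∅) - energyB G hlf A (conf W η₂ ∅)) with hc
  have hweight : ∀ s, Real.exp (β * energyB G hlf A (conf W η₁ s)) =
      Real.exp c * Real.exp (β * energyB G hlf A (conf W η₂ s)) := fun s => by
    rw [← Real.exp_add, hc, ← energyB_conf_sub_energyB_conf G hlf A h s]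
    ring_nf
  have hwsum : ∀ {f' g' : (V → Bool) → ℝ}, (∀ s ⊆ W, f' (conf W η₁ s) = g' (conf W η₂ s)) →
      wsum (fun σ => β * energyB G hlf A σ) W η₁ f' =
        Real.exp c * wsum (fun σ => β * energyB G hlf A σ) W η₂ g' := fun hfg' => by
    simp only [wsum_eq_sum_powerset, Finset.mul_sum]
    refine Finset.sum_congr rfl fun s hs => ?_
    rw [hweight, hfg' s (Finset.mem_powerset.1 hs), mul_assoc]
  unfold gExp
  rw [hwsum hfg, hwsum (f' := fun _ => 1) (g' := fun _ => 1) fun _ _ => rfl,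
    mul_div_mul_left _ _ (Real.exp_pos c).ne']

theorem gProb_spin_le_of_le_on_vbd (A : Finset V) {β : ℝ} (hβ : 0 ≤ β) {x : V} (hx : x ∈ W)
    (h : ∀ v ∈ vbd G hlf W, η₁ v ≤ η₂ v) :
    gProb (fun σ => β * energyB G hlf A σ) W η₁ (fun σ => σ x = true) ≤
      gProb (fun σ => β * energyB G hlf A σ) W η₂ (fun σ => σ x = true) := by
  set η' : V → Bool := fun v => if v ∈ vbd G hlf W then η₁ v else η₂ v
  have hη' : η' ≤ η₂ := fun v => by
    by_cases hv : v ∈ vbd G hlf W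
    · simpa [η', hv] using h v hv
    · simp [η', hv]
  have hspin : Monotone fun σ : V → Bool => σ x = true := fun σ σ' hσσ' hσ =>
    Bool.le_iff_imp.1 (hσσ' x) hσ
  calc gProb _ W η₁ (fun σ => σ x = true)
      = gProb _ W η' (fun σ => σ x = true) :=
        gExp_congr_of_eqOn_vbd G hlf A β (fun v hv => by simp [η', hv]) fun s _ => by simp [hx]
    _ ≤ _ := gProb_le_gProb_of_le G hlf A hβ W hη' hspin

end Locality

section Cluster

variable (G : SimpleGraph V) (hlf : G.LocallyFinite)

def minusClusterEvent (C A : Finset V) (σ : V → Bool) : Prop :=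
  (∀ z ∈ C ∩ A, σ z = false) ∧ ∀ z ∈ vbd G hlf C ∩ A, σ z = true

variable {A C : Finset V}

lemma minusClusterEvent_iff {σ : V → Bool} :
    minusClusterEvent G hlf C A σ ↔ ∀ v ∈ A ∩ cl G hlf C, σ v = decide (v ∈ vbd G hlf C ∩ A) := by
  have hC : ∀ v ∈ C, v ∉ vbd G hlf C := fun v hv h => ((mem_vbd_iff G hlf).1 h).1 hv
  simp only [minusClusterEvent, cl, Finset.mem_inter, Finset.mem_union]
  constructor
  · rintro ⟨hminus, hplus⟩ v ⟨hvA, hvC | hvC⟩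
    · simpa [hC v hvC] using hminus v ⟨hvC, hvA⟩
    · simpa [hvC, hvA] using hplus v ⟨hvC, hvA⟩
  · intro h
    exact ⟨fun v hv => by simpa [hC v hv.1] using h v ⟨hv.2, Or.inl hv.1⟩,
      fun v hv => by simpa [hv.1, hv.2] using h v ⟨hv.2, Or.inr hv.1⟩⟩

variable {v : V}

lemma notMem_of_mem_vbd_sdiff_cl (hv : v ∈ vbd G hlf (A \ cl G hlf C)) : v ∉ C := by
  obtain ⟨-, w, hw, hwv⟩ := (mem_vbd_iff G hlf).1 hv
  intro hvC
  refine (Finset.mem_sdiff.1 hw).2 (Finset.mem_union.2 ?_)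
  by_cases hwC : w ∈ C
  · exact Or.inl hwC
  · exact Or.inr ((mem_vbd_iff G hlf).2 ⟨hwC, v, hvC, hwv.symm⟩)

lemma mem_vbd_of_mem_vbd_sdiff_cl (hv : v ∈ vbd G hlf (A \ cl G hlf C)) (hvA : v ∈ A) :
    v ∈ vbd G hlf C := by
  have hvcl : v ∈ cl G hlf C := by
    by_contra h
    exact ((mem_vbd_iff G hlf).1 hv).1 (Finset.mem_sdiff.2 ⟨hvA, h⟩)
  exact (Finset.mem_union.1 hvcl).resolve_left (notMem_of_mem_vbd_sdiff_cl G hlf hv)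

lemma conf_le_conf_on_vbd_sdiff_cl {η₁ η₂ : V → Bool} (hη : ∀ v ∉ C, η₁ v ≤ η₂ v)
    (t : Finset V) (hv : v ∈ vbd G hlf (A \ cl G hlf C)) :
    conf (A ∩ cl G hlf C) η₁ t v ≤ conf (A ∩ cl G hlf C) η₂ (vbd G hlf C ∩ A) v := by
  by_cases hvA : v ∈ A
  · have hvC := mem_vbd_of_mem_vbd_sdiff_cl G hlf hv hvA
    have hvcl : v ∈ A ∩ cl G hlf C := Finset.mem_inter.2 ⟨hvA, Finset.mem_union_right _ hvC⟩
    simp [hvcl, hvC, hvA]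
  · have hvcl : v ∉ A ∩ cl G hlf C := fun h => hvA (Finset.mem_inter.1 h).1
    simpa [hvcl] using hη v (notMem_of_mem_vbd_sdiff_cl G hlf hv)

theorem gProb_spin_le_cond_minusClusterEvent {β : ℝ} (hβ : 0 ≤ β) {x : V} (hxA : x ∈ A)
    (hxC : x ∉ C) {η₁ η₂ : V → Bool} (hη : ∀ v ∉ C, η₁ v ≤ η₂ v) :
    gProb (fun σ => β * energyB G hlf A σ) A η₁ (fun σ => σ x = true) ≤
      gProb (fun σ => β * energyB G hlf A σ) A η₂
          (fun σ => σ x = true ∧ minusClusterEvent G hlf C A σ) /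
        gProb (fun σ => β * energyB G hlf A σ) A η₂ (minusClusterEvent G hlf C A) := by
  set E : (V → Bool) → ℝ := fun σ => β * energyB G hlf A σ
  set D := A ∩ cl G hlf C
  set W := A \ cl G hlf C
  set t₀ := vbd G hlf C ∩ A
  have hDW : Disjoint D W := (Finset.disjoint_sdiff_inter _ _).symm
  have hA : D ∪ W = A := sup_inf_sdiff _ _
  have ht₀ : t₀ ⊆ D := fun v hv => Finset.mem_inter.2
    ⟨(Finset.mem_inter.1 hv).2, Finset.mem_union_right _ (Finset.mem_inter.1 hv).1⟩
  have hcond := gProb_and_div_gProb_of_iff_pattern E hDW ht₀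
    (fun _ => minusClusterEvent_iff G hlf) η₂ (fun σ => σ x = true)
  rw [hA] at hcond
  rw [hcond]
  by_cases hxW : x ∈ W
  · have hmix := gExp_union_le E hDW fun t _ => gProb_spin_le_of_le_on_vbd G hlf A hβ hxW
      fun v hv => conf_le_conf_on_vbd_sdiff_cl G hlf hη t hv
    rwa [hA] at hmix
  · have hxt₀ : x ∈ t₀ := by
      simp only [W, t₀, cl, Finset.mem_sdiff, Finset.mem_union, Finset.mem_inter] at hxW ⊢
      tauto
    refine (gProb_le_one E A η₁ _).trans (gProb_eq_one E fun σ hσ => ?_).ge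
    rw [hσ x hxW, conf_of_mem (ht₀ hxt₀)]
    simpa using hxt₀

end Cluster

end IsingGlauber

theorem statement13_general {V : Type*} [DecidableEq V]
    (G : SimpleGraph V) (hlf : G.LocallyFinite)
    (o : V)
    (β : ℝ) (hβ : 0 < β)
    (i : ℕ) (Bm : Finset V)
    (S : Finset V)
    (U : Finset V) (hU : U = Bm.filter (fun v => i + 1 ≤ G.dist o v) ∪ S)
    (τ : V → Bool)
    (x : V) (hx : x ∈ S)
    (y : V)
    (C : Finset V) (hCy : y ∈ C) (hCx : x ∉ C)
    (Γ : (V → Bool) → Prop)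
    (hΓ : Γ = fun σ => (∀ z ∈ C ∩ U, σ z = false) ∧ ∀ z ∈ vbd G hlf C ∩ U, σ z = true) :
    gProb (fun σ => β * energyB G hlf U σ) U (Function.update τ y true)
        (fun σ => σ x = true) ≤
      gProb (fun σ => β * energyB G hlf U σ) U (Function.update τ y false)
          (fun σ => σ x = true ∧ Γ σ) /
        gProb (fun σ => β * energyB G hlf U σ) U (Function.update τ y false) Γ := by
  subst hΓ
  have hxU : x ∈ U := hU ▸ Finset.mem_union_right _ hx
  refine gProb_spin_le_cond_minusClusterEvent G hlf hβ.le hxU hCx fun v hvC => ?_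
  have hvy : v ≠ y := fun h => hvC (h ▸ hCy)
  simp [Function.update_of_ne hvy]

/-- inequalities (3.16)–(3.18) of the paper: conditioned on a maximal
negative component `C ∋ y` avoiding `x`, the `μ_U^{y,-}`-probability that the spin
at `x` is plus dominates the unconditioned `μ_U^{y,+}`-probability. -/
theorem statement13 {V : Type*} [DecidableEq V] [Infinite V]
    (G : SimpleGraph V) (hlf : G.LocallyFinite) (hconn : G.Connected)
    (g Δ : ℕ) (hg : 1 ≤ g) (o : V)
    (hgrow : IsGrowing G hlf g o)
    (hΔ : ∀ v : V, (nbr G hlf v).card ≤ Δ)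
    (β : ℝ) (hβ : 0 < β)
    (m i : ℕ) (him : i ≤ m) (Bm : Finset V) (hBm : ∀ v : V, v ∈ Bm ↔ G.dist o v ≤ m)
    (S : Finset V) (hS : ∀ v ∈ S, G.dist o v = i)
    (U : Finset V) (hU : U = Bm.filter (fun v => i + 1 ≤ G.dist o v) ∪ S)
    (τ : V → Bool) (hτ : ∀ v : V, G.dist o v = m + 1 → τ v = true)
    (x : V) (hx : x ∈ S)
    (y : V) (hy : G.dist o y = i) (hyS : y ∉ S)
    (C : Finset V) (hCy : y ∈ C) (hCx : x ∉ C) (hCU : C ⊆ insert y U)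
    (hCconn : (G.induce (C : Set V)).Connected)
    (Γ : (V → Bool) → Prop)
    (hΓ : Γ = fun σ => (∀ z ∈ C ∩ U, σ z = false) ∧ ∀ z ∈ vbd G hlf C ∩ U, σ z = true) :
    gProb (fun σ => β * energyB G hlf U σ) U (Function.update τ y true)
        (fun σ => σ x = true) ≤
      gProb (fun σ => β * energyB G hlf U σ) U (Function.update τ y false)
          (fun σ => σ x = true ∧ Γ σ) /
        gProb (fun σ => β * energyB G hlf U σ) U (Function.update τ y false) Γ :=
  statement13_general G hlf o β hβ i Bm S U hU τ x hx y C hCy hCx Γ hΓ
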